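/- Suppose the Fréchet derivative f' is uniformly continuous on C, C is weakly compact, f is uniformly convex with modulus δ, g is Fréchet differentiable on C (so that a subgradient g'(x) exists at each point), and the stepsizes (γ_k) are chosen either by line minimization for φ = f + g or by the open loop rule. Then the composite problem min_{x∈C} φ(x) has a unique solution x*, and the sequence (x_k) generated by the generalized Frank–Wolfe algorithm converges to x* in norm. -/

import Mathlib

open Filter Topology Set

/-! For a step of length `γ` from `x` towards the linearized minimizer `xbar`, convexity of `f`
and `g` gives `φ y - φ x* ≤ (1 - γ) (φ x - φ x*) + γ ‖f' y - f' x‖ ‖xbar - x‖`, and uniform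
continuity of `f'` on the bounded set `C` makes the error term at most `ε` for all short steps.
Both stepsize rules make the next iterate no worse than such short steps, whose lengths have
divergent sum, so the gap `φ (x k) - φ x*` tends to `0`. Uniform convexity at the midpoint of `z`
and `x*` gives `δ ‖z - x*‖ ≤ 2 (φ z - φ x*)`; this yields uniqueness of the minimizer and, since
`δ` is continuous and positive away from `0` and `C` is bounded, norm convergence. -/

theorem ConvexOn.le_sub_of_hasFDerivAt {X : Type*} [NormedAddCommGroup X] [NormedSpace ℝ X]
    {f : X → ℝ} {f' : X →L[ℝ] ℝ} (hf : ConvexOn ℝ univ f) {u : X} (hu : HasFDerivAt f f' u)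
    (v : X) : f' (v - u) ≤ f v - f u := by
  have hline : HasDerivAt (fun t : ℝ => u + t • (v - u)) (v - u) 0 := by
    simpa using ((hasDerivAt_id (0 : ℝ)).smul_const (v - u)).const_add u
  have hφ : HasDerivAt (fun t : ℝ => f (u + t • (v - u))) (f' (v - u)) 0 :=
    (by simpa using hu : HasFDerivAt f f' (u + (0 : ℝ) • (v - u))).comp_hasDerivAt 0 hline
  have hconv : ConvexOn ℝ univ (fun t : ℝ => f (u + t • (v - u))) := by
    simpa [Function.comp_def, AffineMap.lineMap_apply_module', add_comm] using
      hf.comp_affineMap (AffineMap.lineMap u v)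
  simpa [slope_def_field] using hconv.le_slope_of_hasDerivAt (mem_univ 0) (mem_univ 1) one_pos hφ

theorem convexOn_of_eq_coe {X : Type*} [AddCommGroup X] [Module ℝ X] {C : Set X}
    (hC : Convex ℝ C) {g : X → EReal} {gr : X → ℝ} (hgr : ∀ z ∈ C, g z = gr z)
    (hg : ∀ z ∈ C, ∀ w ∈ C, ∀ lam : ℝ, 0 < lam → lam < 1 →
      g (lam • z + (1 - lam) • w) ≤ (lam : EReal) * g z + ((1 - lam : ℝ) : EReal) * g w) :
    ConvexOn ℝ C gr := by
  refine convexOn_iff_forall_pos.2 ⟨hC, fun z hz w hw a b ha hb hab => ?_⟩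
  obtain rfl : b = 1 - a := by linarith
  have h := hg z hz w hw a ha (by linarith)
  rw [hgr _ (hC hz hw ha.le hb.le hab), hgr z hz, hgr w hw] at h
  exact_mod_cast h

theorem exists_ge_lt_of_le_one_sub_mul_add_mul {a t : ℕ → ℝ} {c ε : ℝ} {K : ℕ} (hc : c < ε)
    (ha : ∀ k, 0 ≤ a k) (ht : ∀ k, 0 ≤ t k)
    (hsum : Tendsto (fun n => ∑ k ∈ Finset.range n, t k) atTop atTop)
    (hrec : ∀ k ≥ K, a (k + 1) ≤ (1 - t k) * a k + t k * c) :
    ∃ N ≥ K, a N < ε := by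
  by_contra! hge
  set S := fun n => ∑ k ∈ Finset.range n, t k
  have hdecay : ∀ n ≥ K, a n ≤ a K - (ε - c) * (S n - S K) := by
    intro n hn
    induction n, hn using Nat.le_induction with
    | base => simp
    | succ n hn ih =>
      have hstep : a (n + 1) ≤ a n - (ε - c) * t n := by
        nlinarith [hrec n hn, hge n hn, ht n]
      simp only [S, Finset.sum_range_succ] at ih ⊢
      linarith
  obtain ⟨n, hn, hnK⟩ :=
    ((hsum.eventually_gt_atTop (S K + a K / (ε - c))).and (eventually_ge_atTop K)).exists
  have : a K < (ε - c) * (S n - S K) := by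
    rw [← div_lt_iff₀' (sub_pos.2 hc)]; linarith
  linarith [hdecay n hnK, ha n]

theorem lt_of_le_one_sub_mul_add_mul {a t : ℕ → ℝ} {c ε : ℝ} {N : ℕ} (hc : c < ε)
    (ht : ∀ k, t k ∈ Icc (0 : ℝ) 1)
    (hrec : ∀ k ≥ N, a (k + 1) ≤ (1 - t k) * a k + t k * c) (hN : a N < ε) :
    ∀ k ≥ N, a k < ε := by
  intro k hk
  induction k, hk using Nat.le_induction with
  | base => exact hN
  | succ k hk ih =>
    have h1 : 0 ≤ 1 - t k := sub_nonneg.2 (ht k).2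
    calc a (k + 1) ≤ (1 - t k) * a k + t k * c := hrec k hk
      _ ≤ (1 - t k) * max (a k) c + t k * max (a k) c := by
        gcongr
        exacts [le_max_left _ _, (ht k).1, le_max_right _ _]
      _ = max (a k) c := by ring
      _ < ε := max_lt ih hc

theorem eventually_lt_of_le_one_sub_mul_add_mul {a t : ℕ → ℝ} {c ε : ℝ} (hc : c < ε)
    (ha : ∀ k, 0 ≤ a k) (ht : ∀ k, t k ∈ Icc (0 : ℝ) 1)
    (hsum : Tendsto (fun n => ∑ k ∈ Finset.range n, t k) atTop atTop)
    (hrec : ∀ᶠ k in atTop, a (k + 1) ≤ (1 - t k) * a k + t k * c) :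
    ∀ᶠ k in atTop, a k < ε := by
  obtain ⟨K, hK⟩ := eventually_atTop.1 hrec
  obtain ⟨N, hNK, hN⟩ :=
    exists_ge_lt_of_le_one_sub_mul_add_mul hc ha (fun k => (ht k).1) hsum hK
  exact eventually_atTop.2 ⟨N, lt_of_le_one_sub_mul_add_mul hc ht
    (fun k hk => hK k (hNK.trans hk)) hN⟩

theorem tendsto_zero_of_modulus_le {δ : ℝ → ℝ} (hδc : ContinuousOn δ (Ici 0))
    (hδpos : ∀ t > 0, 0 < δ t) {r b : ℕ → ℝ} {D : ℝ} (hr : ∀ n, r n ∈ Icc 0 D)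
    (hδr : ∀ n, δ (r n) ≤ b n) (hb : Tendsto b atTop (𝓝 0)) : Tendsto r atTop (𝓝 0) := by
  refine tendsto_order.2 ⟨fun e he => Eventually.of_forall fun n => he.trans_le (hr n).1,
    fun ε hε => ?_⟩
  obtain ⟨t₀, ht₀, hmin⟩ := isCompact_Icc.exists_isMinOn (nonempty_Icc.2 (le_max_left ε D))
    (hδc.mono fun t ht => hε.le.trans ht.1)
  filter_upwards [hb.eventually (gt_mem_nhds (hδpos t₀ (hε.trans_le ht₀.1)))] with n hn
  by_contra! hge
  have : δ t₀ ≤ δ (r n) := hmin ⟨hge, (hr n).2.trans (le_max_right ε D)⟩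
  linarith [hδr n]

theorem exists_norm_sub_mul_le_of_uniformContinuousOn {X E : Type*} [NormedAddCommGroup X]
    [NormedSpace ℝ X] [SeminormedAddCommGroup E] {C : Set X} {F : X → E}
    (hC : Bornology.IsBounded C) (hCcv : Convex ℝ C) (hF : UniformContinuousOn F C)
    {ε : ℝ} (hε : 0 < ε) :
    ∃ γ₀ ∈ Ioc (0 : ℝ) 1, ∀ x ∈ C, ∀ xbar ∈ C, ∀ γ ∈ Icc 0 γ₀,
      ‖F (x + γ • (xbar - x)) - F x‖ * ‖xbar - x‖ ≤ ε := by
  obtain ⟨R, hR, hCR⟩ := hC.exists_pos_norm_le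
  have hdiam : ∀ x ∈ C, ∀ y ∈ C, ‖y - x‖ ≤ 2 * R := fun x hx y hy =>
    (norm_sub_le y x).trans (by linarith [hCR x hx, hCR y hy])
  obtain ⟨η, hη, hFη⟩ := Metric.uniformContinuousOn_iff.1 hF (ε / (2 * R)) (by positivity)
  refine ⟨min 1 (η / (4 * R)), ⟨by positivity, min_le_left _ _⟩, fun x hx xbar hxbar γ hγ => ?_⟩
  have hy := hCcv.add_smul_sub_mem hx hxbar ⟨hγ.1, hγ.2.trans (min_le_left _ _)⟩
  have hnear : dist (x + γ • (xbar - x)) x < η := by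
    rw [dist_eq_norm, add_sub_cancel_left, norm_smul, Real.norm_of_nonneg hγ.1]
    calc γ * ‖xbar - x‖ ≤ η / (4 * R) * (2 * R) :=
          mul_le_mul (hγ.2.trans (min_le_right _ _)) (hdiam x hx xbar hxbar) (norm_nonneg _)
            (by positivity)
      _ = η / 2 := by field_simp; ring
      _ < η := half_lt_self hη
  calc ‖F (x + γ • (xbar - x)) - F x‖ * ‖xbar - x‖ ≤ ε / (2 * R) * (2 * R) := by
        rw [← dist_eq_norm]
        exact mul_le_mul (hFη _ hy x hx hnear).le (hdiam x hx xbar hxbar) (norm_nonneg _)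
          (by positivity)
    _ = ε := by field_simp

section FrankWolfe

variable {X : Type*} [NormedAddCommGroup X] [NormedSpace ℝ X] {C : Set X} {f h : X → ℝ}
  {f' : X → X →L[ℝ] ℝ}

theorem frankWolfe_mem (hC : Convex ℝ C) {x xbar : ℕ → X} {γ : ℕ → ℝ} (hx₀ : x 0 ∈ C)
    (hxbar : ∀ k, xbar k ∈ C) (hγ : ∀ k, γ k ∈ Icc (0 : ℝ) 1)
    (hupdate : ∀ k, x (k + 1) = x k + γ k • (xbar k - x k)) (k : ℕ) : x k ∈ C := by
  induction k with
  | zero => exact hx₀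
  | succ k ih => exact hupdate k ▸ hC.add_smul_sub_mem ih (hxbar k) (hγ k)

theorem frankWolfe_step_le (hf : ConvexOn ℝ univ f) (hf' : ∀ x, HasFDerivAt f (f' x) x)
    (hh : ConvexOn ℝ C h) {x xbar xstar : X} (hx : x ∈ C) (hxbar : xbar ∈ C)
    (hlin : f' x xbar + h xbar ≤ f' x xstar + h xstar) {γ : ℝ} (hγ : γ ∈ Icc (0 : ℝ) 1) :
    (f + h) (x + γ • (xbar - x)) - (f + h) xstar ≤
      (1 - γ) * ((f + h) x - (f + h) xstar) +
        γ * (‖f' (x + γ • (xbar - x)) - f' x‖ * ‖xbar - x‖) := by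
  set y := x + γ • (xbar - x)
  have hfy : f y ≤ f x + γ * f' x (xbar - x) + γ * (‖f' y - f' x‖ * ‖xbar - x‖) := by
    have hgrad := hf.le_sub_of_hasFDerivAt (hf' y) x
    have hxy : x - y = -(γ • (xbar - x)) := by simp only [y]; abel
    rw [hxy, map_neg, map_smul, smul_eq_mul] at hgrad
    have herr : f' y (xbar - x) - f' x (xbar - x) ≤ ‖f' y - f' x‖ * ‖xbar - x‖ :=
      (le_abs_self _).trans ((f' y - f' x).le_opNorm (xbar - x))
    nlinarith [hγ.1]
  have hhy : h y ≤ (1 - γ) * h x + γ * h xbar := by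
    have hy : y = (1 - γ) • x + γ • xbar := by simp only [y]; module
    simpa [hy, smul_eq_mul] using hh.2 hx hxbar (sub_nonneg.2 hγ.2) hγ.1 (by ring)
  have hstar := hf.le_sub_of_hasFDerivAt (hf' x) xstar
  simp only [Pi.add_apply, map_sub] at hstar hfy ⊢
  nlinarith [hγ.1]

theorem exists_frankWolfe_step_le (hC : Bornology.IsBounded C) (hf : ConvexOn ℝ univ f)
    (hf' : ∀ x, HasFDerivAt f (f' x) x) (hf'C : UniformContinuousOn f' C)
    (hh : ConvexOn ℝ C h) (xstar : X) {ε : ℝ} (hε : 0 < ε) :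
    ∃ γ₀ ∈ Ioc (0 : ℝ) 1, ∀ x ∈ C, ∀ xbar ∈ C,
      f' x xbar + h xbar ≤ f' x xstar + h xstar → ∀ γ ∈ Icc 0 γ₀,
        (f + h) (x + γ • (xbar - x)) - (f + h) xstar ≤
          (1 - γ) * ((f + h) x - (f + h) xstar) + γ * ε := by
  obtain ⟨γ₀, hγ₀, herr⟩ := exists_norm_sub_mul_le_of_uniformContinuousOn hC hh.1 hf'C hε
  refine ⟨γ₀, hγ₀, fun x hx xbar hxbar hlin γ hγ => ?_⟩
  have hγ1 : γ ∈ Icc (0 : ℝ) 1 := ⟨hγ.1, hγ.2.trans hγ₀.2⟩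
  calc _ ≤ _ := frankWolfe_step_le hf hf' hh hx hxbar hlin hγ1
    _ ≤ _ := by gcongr; exacts [hγ.1, herr x hx xbar hxbar γ hγ]

/-- What the line-minimization and the open-loop stepsize rules have in common, and all that the
convergence proof uses of them. -/
def ShortStepsDominate (φ : X → ℝ) (x xbar : ℕ → X) : Prop :=
  ∀ γ₀ ∈ Ioc (0 : ℝ) 1, ∃ t : ℕ → ℝ, (∀ k, t k ∈ Icc (0 : ℝ) 1) ∧
    Tendsto (fun n => ∑ k ∈ Finset.range n, t k) atTop atTop ∧
    ∀ᶠ k in atTop, t k ≤ γ₀ ∧ φ (x (k + 1)) ≤ φ (x k + t k • (xbar k - x k))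

theorem shortStepsDominate_of_lineMin {φ : X → ℝ} {x xbar : ℕ → X}
    (hls : ∀ k, ∀ γ ∈ Icc (0 : ℝ) 1, φ (x (k + 1)) ≤ φ (x k + γ • (xbar k - x k))) :
    ShortStepsDominate φ x xbar := fun γ₀ hγ₀ =>
  ⟨fun _ => γ₀, fun _ => Ioc_subset_Icc_self hγ₀,
    by simpa using tendsto_natCast_atTop_atTop.atTop_mul_const hγ₀.1,
    Eventually.of_forall fun k => ⟨le_rfl, hls k γ₀ (Ioc_subset_Icc_self hγ₀)⟩⟩

theorem shortStepsDominate_of_openLoop {φ : X → ℝ} {x xbar : ℕ → X} {γ : ℕ → ℝ}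
    (hupdate : ∀ k, x (k + 1) = x k + γ k • (xbar k - x k)) (hγ : ∀ k, γ k ∈ Icc (0 : ℝ) 1)
    (hlim : Tendsto γ atTop (𝓝 0))
    (hsum : Tendsto (fun n => ∑ k ∈ Finset.range n, γ k) atTop atTop) :
    ShortStepsDominate φ x xbar := fun _ hγ₀ =>
  ⟨γ, hγ, hsum, (hlim.eventually (eventually_le_nhds hγ₀.1)).mono fun k hk =>
    ⟨hk, (congrArg φ (hupdate k)).le⟩⟩

theorem tendsto_frankWolfe_sub_min (hC : Bornology.IsBounded C) (hf : ConvexOn ℝ univ f)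
    (hf' : ∀ x, HasFDerivAt f (f' x) x) (hf'C : UniformContinuousOn f' C)
    (hh : ConvexOn ℝ C h) {xstar : X} (hmin : IsMinOn (f + h) C xstar) {x xbar : ℕ → X}
    (hx : ∀ k, x k ∈ C) (hxbar : ∀ k, xbar k ∈ C)
    (hlin : ∀ k, f' (x k) (xbar k) + h (xbar k) ≤ f' (x k) xstar + h xstar)
    (hsteps : ShortStepsDominate (f + h) x xbar) :
    Tendsto (fun k => (f + h) (x k) - (f + h) xstar) atTop (𝓝 0) := by
  have hgap : ∀ k, 0 ≤ (f + h) (x k) - (f + h) xstar := fun k =>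
    sub_nonneg.2 (isMinOn_iff.1 hmin _ (hx k))
  refine tendsto_order.2 ⟨fun e he => Eventually.of_forall fun k => he.trans_le (hgap k),
    fun ε hε => ?_⟩
  obtain ⟨γ₀, hγ₀, hdesc⟩ := exists_frankWolfe_step_le hC hf hf' hf'C hh xstar (half_pos hε)
  obtain ⟨t, ht, hsum, hstep⟩ := hsteps γ₀ hγ₀
  refine eventually_lt_of_le_one_sub_mul_add_mul (half_lt_self hε) hgap ht hsum ?_
  filter_upwards [hstep] with k ⟨htk, hk⟩
  exact (sub_le_sub_right hk _).trans
    (hdesc (x k) (hx k) (xbar k) (hxbar k) (hlin k) (t k) ⟨(ht k).1, htk⟩)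

theorem IsMinOn.modulus_le_two_mul_sub {δ : ℝ → ℝ}
    (hf : ∀ z w : X, ∀ lam : ℝ, 0 < lam → lam < 1 →
      f (lam • z + (1 - lam) • w) ≤ lam * f z + (1 - lam) * f w - lam * (1 - lam) * δ ‖z - w‖)
    (hh : ConvexOn ℝ C h) {xstar : X} (hxstar : xstar ∈ C) (hmin : IsMinOn (f + h) C xstar)
    {z : X} (hz : z ∈ C) : δ ‖z - xstar‖ ≤ 2 * ((f + h) z - (f + h) xstar) := by
  have hhalf : (0 : ℝ) ≤ 1 / 2 := by norm_num
  have hmid := hh.1 hz hxstar hhalf (sub_nonneg.2 (by norm_num)) (add_sub_cancel _ _)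
  have hfmid := hf z xstar (1 / 2) (by norm_num) (by norm_num)
  have hhmid := hh.2 hz hxstar hhalf (sub_nonneg.2 (by norm_num)) (add_sub_cancel _ _)
  have hle := isMinOn_iff.1 hmin _ hmid
  norm_num at hfmid hhmid hle ⊢
  linarith

end FrankWolfe

theorem stmt_17_general
    {X : Type*} [NormedAddCommGroup X] [NormedSpace ℝ X]
    (C : Set X)
    (hCbd : Bornology.IsBounded C) (hCcv : Convex ℝ C)
    (f : X → ℝ) (f' : X → X →L[ℝ] ℝ)
    (hfconv : ConvexOn ℝ Set.univ f)
    (hfderiv : ∀ x : X, HasFDerivAt f (f' x) x)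
    (hfUC : UniformContinuousOn f' C)
    (δ : ℝ → ℝ)
    (hδcont : ContinuousOn δ (Set.Ici 0))
    (hδpos : ∀ t > (0 : ℝ), 0 < δ t)
    (hfUnifConv : ∀ z w : X, ∀ lam : ℝ, 0 < lam → lam < 1 →
      f (lam • z + (1 - lam) • w) ≤
        lam * f z + (1 - lam) * f w - lam * (1 - lam) * δ ‖z - w‖)
    (g : X → EReal)
    (hgconv : ∀ z w : X, ∀ lam : ℝ, 0 < lam → lam < 1 →
      g (lam • z + (1 - lam) • w) ≤ (lam : EReal) * g z + ((1 - lam : ℝ) : EReal) * g w)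
    (gr : X → ℝ)
    (hgr : ∀ z ∈ C, g z = (gr z : EReal))
    (xstar : X) (hxstarC : xstar ∈ C)
    (hxstarmin : ∀ y ∈ C, (f xstar : EReal) + g xstar ≤ (f y : EReal) + g y)
    (x xbar : ℕ → X) (γ : ℕ → ℝ)
    (hx0 : x 0 ∈ C)
    (hxbarC : ∀ k, xbar k ∈ C)
    (hxbarmin : ∀ k, ∀ y ∈ C,
      (f' (x k) (xbar k) : EReal) + g (xbar k) ≤ (f' (x k) y : EReal) + g y)
    (hupdate : ∀ k, x (k + 1) = x k + γ k • (xbar k - x k))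
    (hstep :
      ((∀ k, γ k ∈ Set.Icc (0 : ℝ) 1) ∧
        ∀ k, ∀ γ' ∈ Set.Icc (0 : ℝ) 1,
          (f (x k + γ k • (xbar k - x k)) : EReal) + g (x k + γ k • (xbar k - x k)) ≤
            (f (x k + γ' • (xbar k - x k)) : EReal) + g (x k + γ' • (xbar k - x k)))
      ∨ ((∀ k, γ k ∈ Set.Ioc (0 : ℝ) 1) ∧ Tendsto γ atTop (𝓝 0) ∧
          Tendsto (fun n => ∑ k ∈ Finset.range n, γ k) atTop atTop)) :
    (∀ z ∈ C, (∀ y ∈ C, (f z : EReal) + g z ≤ (f y : EReal) + g y) → z = xstar) ∧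
      Tendsto x atTop (𝓝 xstar) := by
  have hreal : ∀ p q : ℝ, ∀ z ∈ C, ∀ w ∈ C,
      ((p : EReal) + g z ≤ q + g w ↔ p + gr z ≤ q + gr w) := by
    intro p q z hz w hw
    rw [hgr z hz, hgr w hw]
    norm_cast
  have hgr_conv : ConvexOn ℝ C gr := convexOn_of_eq_coe hCcv hgr fun z _ w _ => hgconv z w
  have hmin : IsMinOn (f + gr) C xstar :=
    isMinOn_iff.2 fun y hy => (hreal _ _ _ hxstarC _ hy).1 (hxstarmin y hy)
  have hγ : ∀ k, γ k ∈ Icc (0 : ℝ) 1 := by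
    rcases hstep with ⟨h, -⟩ | ⟨h, -⟩
    exacts [h, fun k => Ioc_subset_Icc_self (h k)]
  have hx := frankWolfe_mem hCcv hx0 hxbarC hγ hupdate
  have hseg : ∀ k, ∀ γ' ∈ Icc (0 : ℝ) 1, x k + γ' • (xbar k - x k) ∈ C := fun k _ =>
    hCcv.add_smul_sub_mem (hx k) (hxbarC k)
  have hsteps : ShortStepsDominate (f + gr) x xbar := by
    rcases hstep with ⟨-, hls⟩ | ⟨-, hlim, hsum⟩
    · refine shortStepsDominate_of_lineMin fun k γ' hγ' => ?_
      rw [hupdate]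
      exact (hreal _ _ _ (hseg k _ (hγ k)) _ (hseg k _ hγ')).1 (hls k γ' hγ')
    · exact shortStepsDominate_of_openLoop hupdate hγ hlim hsum
  have hgap := tendsto_frankWolfe_sub_min hCbd hfconv hfderiv hfUC hgr_conv hmin hx hxbarC
    (fun k => (hreal _ _ _ (hxbarC k) _ hxstarC).1 (hxbarmin k xstar hxstarC)) hsteps
  have hδ : ∀ z ∈ C, δ ‖z - xstar‖ ≤ 2 * ((f + gr) z - (f + gr) xstar) := fun z hz =>
    hmin.modulus_le_two_mul_sub hfUnifConv hgr_conv hxstarC hz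
  refine ⟨fun z hz hzmin => ?_, ?_⟩
  · have hle : (f + gr) z ≤ (f + gr) xstar := (hreal _ _ _ hz _ hxstarC).1 (hzmin xstar hxstarC)
    by_contra hne
    linarith [hδ z hz, hδpos _ (norm_sub_pos_iff.2 hne)]
  · obtain ⟨D, hD⟩ := Metric.isBounded_iff.1 hCbd
    rw [tendsto_iff_norm_sub_tendsto_zero]
    refine tendsto_zero_of_modulus_le hδcont hδpos
      (fun n => ⟨norm_nonneg _, dist_eq_norm (x n) xstar ▸ hD (hx n) hxstarC⟩)
      (fun n => hδ _ (hx n)) (by simpa using hgap.const_mul 2)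

/-- **Norm convergence of generalized Frank–Wolfe iterates under uniform convexity**
(Theorem 5.3 (ii)). If `C` is weakly compact, `f'` is uniformly continuous on `C`, `f`
is uniformly convex with modulus `δ`, `g` is proper lsc convex, finite and Fréchet
differentiable on `C`, and the stepsizes are chosen either by line minimization for
`φ = f + g` or by the open loop rule, then the composite problem `min_C φ` has a unique
solution `x*` and the generalized Frank–Wolfe iterates converge to `x*` in norm. -/
theorem stmt_17
    {X : Type*} [NormedAddCommGroup X] [NormedSpace ℝ X] [CompleteSpace X]
    (C : Set X) (hCne : C.Nonempty) (hCcl : IsClosed C)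
    (hCbd : Bornology.IsBounded C) (hCcv : Convex ℝ C)
    (hCwc : IsCompact (⇑(toWeakSpace ℝ X) '' C))
    (f : X → ℝ) (f' : X → X →L[ℝ] ℝ)
    (hfconv : ConvexOn ℝ Set.univ f)
    (hfderiv : ∀ x : X, HasFDerivAt f (f' x) x)
    (hfUC : UniformContinuousOn f' C)
    (δ : ℝ → ℝ)
    (hδcont : ContinuousOn δ (Set.Ici 0)) (hδ0 : δ 0 = 0)
    (hδpos : ∀ t > (0 : ℝ), 0 < δ t) (hδnonneg : ∀ t ≥ (0 : ℝ), 0 ≤ δ t)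
    (hfUnifConv : ∀ z w : X, ∀ lam : ℝ, 0 < lam → lam < 1 →
      f (lam • z + (1 - lam) • w) ≤
        lam * f z + (1 - lam) * f w - lam * (1 - lam) * δ ‖z - w‖)
    (g : X → EReal)
    (hgproper : ∃ z : X, g z ≠ ⊤) (hgnebot : ∀ z : X, g z ≠ ⊥)
    (hglsc : LowerSemicontinuous g)
    (hgconv : ∀ z w : X, ∀ lam : ℝ, 0 < lam → lam < 1 →
      g (lam • z + (1 - lam) • w) ≤ (lam : EReal) * g z + ((1 - lam : ℝ) : EReal) * g w)
    (hgC : ∀ z ∈ C, g z ≠ ⊤)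
    (gr : X → ℝ) (g' : X → X →L[ℝ] ℝ)
    (hgr : ∀ z ∈ C, g z = (gr z : EReal))
    (hgderiv : ∀ z ∈ C, HasFDerivWithinAt gr (g' z) C z)
    (xstar : X) (hxstarC : xstar ∈ C)
    (hxstarmin : ∀ y ∈ C, (f xstar : EReal) + g xstar ≤ (f y : EReal) + g y)
    (x xbar : ℕ → X) (γ : ℕ → ℝ)
    (hx0 : x 0 ∈ C)
    (hxbarC : ∀ k, xbar k ∈ C)
    (hxbarmin : ∀ k, ∀ y ∈ C,
      (f' (x k) (xbar k) : EReal) + g (xbar k) ≤ (f' (x k) y : EReal) + g y)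
    (hupdate : ∀ k, x (k + 1) = x k + γ k • (xbar k - x k))
    (hstep :
      ((∀ k, γ k ∈ Set.Icc (0 : ℝ) 1) ∧
        ∀ k, ∀ γ' ∈ Set.Icc (0 : ℝ) 1,
          (f (x k + γ k • (xbar k - x k)) : EReal) + g (x k + γ k • (xbar k - x k)) ≤
            (f (x k + γ' • (xbar k - x k)) : EReal) + g (x k + γ' • (xbar k - x k)))
      ∨ ((∀ k, γ k ∈ Set.Ioc (0 : ℝ) 1) ∧ Tendsto γ atTop (𝓝 0) ∧
          Tendsto (fun n => ∑ k ∈ Finset.range n, γ k) atTop atTop)) :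
    (∀ z ∈ C, (∀ y ∈ C, (f z : EReal) + g z ≤ (f y : EReal) + g y) → z = xstar) ∧
      Tendsto x atTop (𝓝 xstar) :=
  stmt_17_general C hCbd hCcv f f' hfconv hfderiv hfUC δ hδcont hδpos hfUnifConv g hgconv gr hgr
    xstar hxstarC hxstarmin x xbar γ hx0 hxbarC hxbarmin hupdate hstep
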